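/- Let d ≥ 6 and let I ⊆ ℝ be an interval. There exists a constant C = C(d) such that for every measurable v : I × ℝ^d → ℂ, with Ω := {(t,x) ∈ I × ℝ^d : |v(t,x)| > W(x)/4}, one has ‖ W^{p_c−2} |∇W| · |v| ‖_{L^2_t L^{2d/(d+2)}_x(Ω)} ≤ C ‖v‖_{L^{q₀}_t L^{r₀}_x(I×ℝ^d)}^{(2d+3)/(2(d−2))}, where q₀ = (2d+3)/(d−2) and r₀ = 2d(2d+3)/((d−2)(2d−1)). -/

import Mathlib

open MeasureTheory
open scoped ENNReal

noncomputable section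

/-- ℝ^d as Euclidean space -/
abbrev Euc (d : ℕ) := EuclideanSpace ℝ (Fin d)

/-- The ground state W(x) = (1 + |x|²/(d(d−2)))^{−(d−2)/2}. -/
def Wgs (d : ℕ) (x : Euc d) : ℝ :=
  (1 + ‖x‖ ^ 2 / ((d : ℝ) * ((d : ℝ) - 2))) ^ (-(((d : ℝ) - 2) / 2))

/-- p_c = (d+2)/(d-2) -/
def pc (d : ℕ) : ℝ := ((d : ℝ) + 2) / ((d : ℝ) - 2)

/-- Mixed norm ‖F‖_{L^q_t L^r_x(Ω)} = (∫_I (∫_{ℝ^d} |F(t,x)|^r 1_Ω(t,x) dx)^{q/r} dt)^{1/q}. -/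
def mixNorm (d : ℕ) (q r : ℝ) (I : Set ℝ) (Ω : Set (ℝ × Euc d))
    (F : ℝ × Euc d → ℝ) : ℝ≥0∞ :=
  (∫⁻ t in I,
      (∫⁻ x, Ω.indicator (fun p => ENNReal.ofReal (|F p| ^ r)) (t, x)) ^ (q / r)) ^ (1 / q)

/-- time exponent q₀ = (2d+3)/(d−2) -/
def q0 (d : ℕ) : ℝ := (2 * (d : ℝ) + 3) / ((d : ℝ) - 2)

/-- space exponent r₀ = 2d(2d+3)/((d−2)(2d−1)) -/
def r0 (d : ℕ) : ℝ := 2 * (d : ℝ) * (2 * (d : ℝ) + 3) / (((d : ℝ) - 2) * (2 * (d : ℝ) - 1))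

/-! On `Ω` we have `W < 4|v|`, so with `β = (2d+3)/(2(d-2)) = q₀/2` the factor `W^(β-1)` can be
traded for `(4|v|)^(β-1)`: there `W^(p_c-2) |∇W| |v| ≤ 4^(β-1) a(x) |v|^β` with
`a = W^(p_c-1-β) |∇W| ≲ (1+|x|)^(-3/2)`, which lies in `L^(4d/5)`. Hölder in `x` with
`(d+2)/(2d) = 5/(4d) + (2d-1)/(4d)` bounds the left side by `‖4^(β-1) a‖_{4d/5}` times
`‖|v|^β‖_{L²_t L^(4d/(2d-1))_x} = ‖v‖_{L^q₀_t L^r₀_x}^β`,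
because `2β = q₀` and `4dβ/(2d-1) = r₀`. -/

open Set

lemma exists_pos_le_ofReal_of_ne_top {x : ℝ≥0∞} (hx : x ≠ ⊤) :
    ∃ C : ℝ, 0 < C ∧ x ≤ ENNReal.ofReal C :=
  ⟨x.toReal + 1, by positivity, by
    rw [ENNReal.ofReal_add ENNReal.toReal_nonneg zero_le_one, ENNReal.ofReal_toReal hx]
    exact le_self_add⟩

lemma rpow_add_mul_mul_le {w G y c e α : ℝ} (hw : 0 < w) (hG : 0 ≤ G) (hc : 0 < c)
    (hwy : w ≤ c * y) (hα : 0 ≤ α) :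
    w ^ (e + α) * G * y ≤ c ^ α * (w ^ e * G) * y ^ (α + 1) := by
  have hy : 0 < y := pos_of_mul_pos_right (hw.trans_le hwy) hc.le
  calc w ^ (e + α) * G * y = w ^ e * G * w ^ α * y := by rw [Real.rpow_add hw]; ring
    _ ≤ w ^ e * G * (c * y) ^ α * y := by gcongr
    _ = c ^ α * (w ^ e * G) * y ^ (α + 1) := by
        rw [Real.mul_rpow hc.le hy.le, Real.rpow_add_one hy.ne']; ring

lemma eLpNorm'_lt_top_of_abs_le_one_add_norm_rpow {E : Type*} [NormedAddCommGroup E]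
    [NormedSpace ℝ E] [FiniteDimensional ℝ E] [MeasurableSpace E] [BorelSpace E]
    (μ : Measure E) [μ.IsAddHaarMeasure] {f : E → ℝ} {K γ s : ℝ} (hs : 0 < s)
    (hγs : (Module.finrank ℝ E : ℝ) < γ * s) (hf : ∀ x, |f x| ≤ K * (1 + ‖x‖) ^ (-γ)) :
    eLpNorm' f s μ < ⊤ := by
  have hK : 0 ≤ K := by simpa using (abs_nonneg _).trans (hf 0)
  have hpt (x : E) :
      ‖f x‖ₑ ^ s ≤ ENNReal.ofReal (K ^ s) * ENNReal.ofReal ((1 + ‖x‖) ^ (-(γ * s))) := by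
    rw [Real.enorm_eq_ofReal_abs, ENNReal.ofReal_rpow_of_nonneg (abs_nonneg _) hs.le,
      ← ENNReal.ofReal_mul (by positivity), neg_mul_eq_neg_mul, Real.rpow_mul (by positivity),
      ← Real.mul_rpow hK (by positivity)]
    exact ENNReal.ofReal_le_ofReal (Real.rpow_le_rpow (abs_nonneg _) (hf x) hs.le)
  refine ENNReal.rpow_lt_top_of_nonneg (by positivity)
    (ne_top_of_le_ne_top ?_ (lintegral_mono hpt))
  rw [lintegral_const_mul' _ _ ENNReal.ofReal_ne_top]
  exact ENNReal.mul_ne_top ENNReal.ofReal_ne_top (finite_integral_one_add_norm hγs).ne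

section MixedNorm

variable {d : ℕ} {q r : ℝ} {I : Set ℝ}

lemma mixNorm_mono {Ω Ω' : Set (ℝ × Euc d)} {F G : ℝ × Euc d → ℝ} (hq : 0 ≤ q) (hr : 0 ≤ r)
    (hΩ : Ω ⊆ Ω') (hFG : ∀ p ∈ Ω, |F p| ≤ G p) :
    mixNorm d q r I Ω F ≤ mixNorm d q r I Ω' G := by
  unfold mixNorm
  gcongr with t x
  by_cases hp : (t, x) ∈ Ω
  · rw [indicator_of_mem hp, indicator_of_mem (hΩ hp)]
    exact ENNReal.ofReal_le_ofReal
      (Real.rpow_le_rpow (abs_nonneg _) ((hFG _ hp).trans (le_abs_self _)) hr)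
  · simp [indicator_of_notMem hp]

lemma mixNorm_rpow {Ω : Set (ℝ × Euc d)} {w : ℝ × Euc d → ℝ} (hw : ∀ p, 0 ≤ w p) {β : ℝ}
    (hβ : β ≠ 0) :
    mixNorm d q r I Ω (fun p => w p ^ β) = mixNorm d (β * q) (β * r) I Ω w ^ β := by
  unfold mixNorm
  have hexp (p : ℝ × Euc d) : |w p ^ β| ^ r = |w p| ^ (β * r) := by
    rw [abs_of_nonneg (Real.rpow_nonneg (hw p) _), abs_of_nonneg (hw p), Real.rpow_mul (hw p)]
  simp only [hexp, mul_div_mul_left _ _ hβ, ← ENNReal.rpow_mul]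
  congr 1
  field_simp

lemma mixNorm_univ (hr : 0 < r) (F : ℝ × Euc d → ℝ) :
    mixNorm d q r I univ F =
      (∫⁻ t in I, eLpNorm' (fun x => F (t, x)) r volume ^ q) ^ (1 / q) := by
  unfold mixNorm eLpNorm'
  simp only [indicator_univ, ← ENNReal.rpow_mul, Real.enorm_eq_ofReal_abs,
    ENNReal.ofReal_rpow_of_nonneg (abs_nonneg _) hr.le]
  congr 3 with t
  field_simp

lemma mixNorm_mul_le {s r' : ℝ} (hq : 0 < q) (hr : 0 < r) (hrs : r < s)
    (hrsr' : 1 / r = 1 / s + 1 / r') {a : Euc d → ℝ} (ha : Measurable a)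
    (ha_fin : eLpNorm' a s volume ≠ ⊤) {w : ℝ × Euc d → ℝ} (hw : Measurable w) :
    mixNorm d q r I univ (fun p => a p.2 * w p) ≤
      eLpNorm' a s volume * mixNorm d q r' I univ w := by
  have hr' : 0 < r' := one_div_pos.mp (by linarith [one_div_lt_one_div_of_lt hr hrs])
  rw [mixNorm_univ hr, mixNorm_univ hr']
  have holder (t : ℝ) : eLpNorm' (fun x => a x * w (t, x)) r volume ≤
      eLpNorm' a s volume * eLpNorm' (fun x => w (t, x)) r' volume := by
    simpa using eLpNorm'_le_eLpNorm'_mul_eLpNorm' (g := fun x => w (t, x))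
      ha.aestronglyMeasurable (hw.comp measurable_prodMk_left).aestronglyMeasurable (· * ·) 1
      (ae_of_all _ fun x => by simp [nnnorm_mul]) hr hrs hrsr'
  calc (∫⁻ t in I, eLpNorm' (fun x => a x * w (t, x)) r volume ^ q) ^ (1 / q)
      ≤ (∫⁻ t in I, eLpNorm' a s volume ^ q *
          eLpNorm' (fun x => w (t, x)) r' volume ^ q) ^ (1 / q) := by
        gcongr with t
        rw [← ENNReal.mul_rpow_of_nonneg _ _ hq.le]
        gcongr
        exact holder t
    _ = eLpNorm' a s volume *
          (∫⁻ t in I, eLpNorm' (fun x => w (t, x)) r' volume ^ q) ^ (1 / q) := by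
        rw [lintegral_const_mul' _ _ (ENNReal.rpow_ne_top_of_nonneg hq.le ha_fin),
          ENNReal.mul_rpow_of_nonneg _ _ (by positivity), ← ENNReal.rpow_mul,
          mul_one_div_cancel hq.ne', ENNReal.rpow_one]

end MixedNorm

def wgsBase (d : ℕ) (x : Euc d) : ℝ := 1 + ‖x‖ ^ 2 / ((d : ℝ) * ((d : ℝ) - 2))

section GroundState

variable {d : ℕ}

lemma Wgs_eq_rpow (x : Euc d) : Wgs d x = wgsBase d x ^ (-(((d : ℝ) - 2) / 2)) := rfl

lemma cast_sub_two_pos (hd : 2 < d) : (0 : ℝ) < d - 2 := by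
  have : (3 : ℝ) ≤ d := by exact_mod_cast hd
  linarith

lemma one_le_mul_cast_sub_two (hd : 2 < d) : 1 ≤ (d : ℝ) * ((d : ℝ) - 2) := by
  have : (3 : ℝ) ≤ d := by exact_mod_cast hd
  nlinarith

lemma one_le_wgsBase (hd : 2 < d) (x : Euc d) : 1 ≤ wgsBase d x := by
  have := one_le_mul_cast_sub_two hd
  unfold wgsBase
  linarith [div_nonneg (sq_nonneg ‖x‖) (zero_le_one.trans this)]

lemma one_add_norm_sq_le_wgsBase (hd : 2 < d) (x : Euc d) :
    (1 + ‖x‖) ^ 2 ≤ 2 * ((d : ℝ) * ((d : ℝ) - 2)) * wgsBase d x := by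
  have hc := one_le_mul_cast_sub_two hd
  have hexp : 2 * ((d : ℝ) * ((d : ℝ) - 2)) * wgsBase d x =
      2 * ((d : ℝ) * ((d : ℝ) - 2)) + 2 * ‖x‖ ^ 2 := by
    have := (cast_sub_two_pos hd).ne'
    unfold wgsBase
    field_simp
  rw [hexp]
  nlinarith [sq_nonneg (‖x‖ - 1)]

lemma Wgs_pos (hd : 2 < d) (x : Euc d) : 0 < Wgs d x := by
  rw [Wgs_eq_rpow]
  exact Real.rpow_pos_of_pos (by linarith [one_le_wgsBase hd x]) _

lemma hasFDerivAt_wgsBase (x : Euc d) :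
    HasFDerivAt (wgsBase d) ((2 / ((d : ℝ) * ((d : ℝ) - 2))) • innerSL ℝ x) x := by
  have hbase : wgsBase d = fun y : Euc d => 1 + ((d : ℝ) * ((d : ℝ) - 2))⁻¹ • ‖y‖ ^ 2 := by
    funext y
    simp [wgsBase, div_eq_inv_mul]
  rw [hbase]
  refine ((HasFDerivAt.const_smul (hasStrictFDerivAt_norm_sq x).hasFDerivAt
    ((d : ℝ) * ((d : ℝ) - 2))⁻¹).const_add 1).congr_fderiv ?_
  ext y
  simp only [smul_apply, innerSL_apply_apply, smul_eq_mul, nsmul_eq_mul]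
  ring

lemma hasFDerivAt_Wgs (hd : 2 < d) (x : Euc d) :
    HasFDerivAt (Wgs d) ((-(((d : ℝ) - 2) / 2) * wgsBase d x ^ (-(((d : ℝ) - 2) / 2) - 1)) •
      (2 / ((d : ℝ) * ((d : ℝ) - 2))) • innerSL ℝ x) x :=
  (hasFDerivAt_wgsBase x).rpow_const (Or.inl (by linarith [one_le_wgsBase hd x]))

lemma continuous_Wgs (hd : 2 < d) : Continuous (Wgs d) :=
  continuous_iff_continuousAt.2 fun x => (hasFDerivAt_Wgs hd x).continuousAt

lemma norm_fderiv_Wgs (hd : 2 < d) (x : Euc d) :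
    ‖fderiv ℝ (Wgs d) x‖ = ‖x‖ / d * wgsBase d x ^ (-((d : ℝ) / 2)) := by
  have hd2 := cast_sub_two_pos hd
  have hu := zero_lt_one.trans_le (one_le_wgsBase hd x)
  rw [(hasFDerivAt_Wgs hd x).fderiv, norm_smul, norm_smul, innerSL_apply_norm, Real.norm_eq_abs,
    Real.norm_eq_abs, abs_mul, abs_neg, abs_of_pos (Real.rpow_pos_of_pos hu _),
    abs_of_pos (by positivity : (0 : ℝ) < ((d : ℝ) - 2) / 2), abs_of_pos (by positivity),
    show -(((d : ℝ) - 2) / 2) - 1 = -((d : ℝ) / 2) by ring]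
  field_simp

lemma wgsBase_rpow_neg_le (hd : 2 < d) {m : ℝ} (hm : 0 ≤ m) (x : Euc d) :
    wgsBase d x ^ (-m) ≤ (2 * ((d : ℝ) * ((d : ℝ) - 2))) ^ m * (1 + ‖x‖) ^ (-(2 * m)) := by
  have hc := one_le_mul_cast_sub_two hd
  have hu := zero_lt_one.trans_le (one_le_wgsBase hd x)
  have hsq : (1 + ‖x‖) ^ (2 * m) = ((1 + ‖x‖) ^ 2) ^ m := by
    rw [Real.rpow_mul (by positivity), Real.rpow_two]
  rw [Real.rpow_neg hu.le, Real.rpow_neg (by positivity), ← div_eq_mul_inv,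
    le_div_iff₀ (by positivity), inv_mul_le_iff₀ (by positivity), hsq, mul_comm,
    ← Real.mul_rpow (by positivity) hu.le]
  exact Real.rpow_le_rpow (by positivity) (one_add_norm_sq_le_wgsBase hd x) hm

lemma Wgs_rpow_mul_norm_fderiv_le (hd : 2 < d) {e : ℝ} (he : -1 ≤ e) :
    ∃ K, ∀ x : Euc d, Wgs d x ^ e * ‖fderiv ℝ (Wgs d) x‖ ≤
      K * (1 + ‖x‖) ^ (-(((d : ℝ) - 2) * (e + 1) + 1)) := by
  have hd2 := cast_sub_two_pos hd
  have he1 : 0 ≤ e + 1 := by linarith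
  set m := ((d : ℝ) - 2) / 2 * (e + 1) + 1
  have hm : 0 ≤ m := by positivity
  refine ⟨(2 * ((d : ℝ) * ((d : ℝ) - 2))) ^ m / d, fun x => ?_⟩
  have hu := zero_lt_one.trans_le (one_le_wgsBase hd x)
  have hsplit : Wgs d x ^ e * ‖fderiv ℝ (Wgs d) x‖ = ‖x‖ / d * wgsBase d x ^ (-m) := by
    rw [norm_fderiv_Wgs hd, Wgs_eq_rpow, ← Real.rpow_mul hu.le, mul_left_comm,
      ← Real.rpow_add hu]
    congr 2
    ring
  rw [hsplit, show -(((d : ℝ) - 2) * (e + 1) + 1) = 1 + -(2 * m) by ring,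
    Real.rpow_add (by positivity : (0 : ℝ) < 1 + ‖x‖), Real.rpow_one]
  calc ‖x‖ / d * wgsBase d x ^ (-m)
      ≤ (1 + ‖x‖) / d * ((2 * ((d : ℝ) * ((d : ℝ) - 2))) ^ m * (1 + ‖x‖) ^ (-(2 * m))) := by
        gcongr
        · linarith
        · exact wgsBase_rpow_neg_le hd hm x
    _ = _ := by ring

lemma eLpNorm'_Wgs_rpow_mul_norm_fderiv_lt_top (hd : 2 < d) {e s : ℝ} (he : -1 ≤ e)
    (hs : 0 < s) (hes : (d : ℝ) < (((d : ℝ) - 2) * (e + 1) + 1) * s) :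
    eLpNorm' (fun x : Euc d => Wgs d x ^ e * ‖fderiv ℝ (Wgs d) x‖) s volume < ⊤ := by
  obtain ⟨K, hK⟩ := Wgs_rpow_mul_norm_fderiv_le hd he
  refine eLpNorm'_lt_top_of_abs_le_one_add_norm_rpow (K := K) volume hs (by simpa using hes)
    fun x => ?_
  rw [abs_of_nonneg (by have := Wgs_pos hd x; positivity)]
  exact hK x

lemma exists_weight_of_Wgs_lt_four_mul (hd : 2 < d) :
    ∃ a : Euc d → ℝ, Measurable a ∧ eLpNorm' a (4 * d / 5) volume < ⊤ ∧
      ∀ x y, Wgs d x / 4 < y → |Wgs d x ^ (pc d - 2) * ‖fderiv ℝ (Wgs d) x‖ * y| ≤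
        a x * y ^ ((2 * (d : ℝ) + 3) / (2 * ((d : ℝ) - 2))) := by
  have hd2 := cast_sub_two_pos hd
  set β : ℝ := (2 * (d : ℝ) + 3) / (2 * ((d : ℝ) - 2)) with hβ
  have hβ1 : 0 ≤ β - 1 := by rw [hβ, sub_nonneg, one_le_div (by linarith)]; linarith
  have he : pc d - 1 - β + 1 = 1 / (2 * ((d : ℝ) - 2)) := by rw [hβ, pc]; field_simp; ring
  refine ⟨fun x => 4 ^ (β - 1) * (Wgs d x ^ (pc d - 1 - β) * ‖fderiv ℝ (Wgs d) x‖),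
    ((((continuous_Wgs hd).measurable.pow_const _).mul
      (measurable_fderiv ℝ (Wgs d)).norm).const_mul _), ?_, fun x y hxy => ?_⟩
  · refine (eLpNorm'_const_smul_le (c := (4 : ℝ) ^ (β - 1)) (by positivity)).trans_lt
      (ENNReal.mul_lt_top enorm_lt_top (eLpNorm'_Wgs_rpow_mul_norm_fderiv_lt_top hd ?_
        (by positivity) ?_))
    · linarith [show 0 < 1 / (2 * ((d : ℝ) - 2)) by positivity]
    · rw [he, show ((d : ℝ) - 2) * (1 / (2 * ((d : ℝ) - 2))) = 1 / 2 by field_simp]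
      linarith
  · have hW := Wgs_pos hd x
    have key := rpow_add_mul_mul_le (e := pc d - 1 - β) (y := y) hW
      (norm_nonneg (fderiv ℝ (Wgs d) x)) four_pos (by linarith) hβ1
    rw [sub_add_cancel, show pc d - 1 - β + (β - 1) = pc d - 2 by ring] at key
    have hy : 0 < y := by linarith
    rwa [abs_of_nonneg (by positivity)]

end GroundState

theorem Wpc2_gradW_v_large_regime_general (d : ℕ) (hd : 6 ≤ d) (I : Set ℝ) :
    ∃ C : ℝ, 0 < C ∧ ∀ v : ℝ × Euc d → ℂ, Measurable v →
      mixNorm d 2 (2 * (d : ℝ) / ((d : ℝ) + 2)) I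
          {p : ℝ × Euc d | p.1 ∈ I ∧ Wgs d p.2 / 4 < ‖v p‖}
          (fun p => (Wgs d p.2) ^ (pc d - 2) * ‖fderiv ℝ (Wgs d) p.2‖ * ‖v p‖) ≤
        ENNReal.ofReal C *
          (mixNorm d (q0 d) (r0 d) I Set.univ (fun p => ‖v p‖)) ^
            ((2 * (d : ℝ) + 3) / (2 * ((d : ℝ) - 2))) := by
  have hd' : (6 : ℝ) ≤ d := by exact_mod_cast hd
  set β : ℝ := (2 * (d : ℝ) + 3) / (2 * ((d : ℝ) - 2))
  obtain ⟨a, ha_meas, ha_fin, ha⟩ := exists_weight_of_Wgs_lt_four_mul (by omega : 2 < d)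
  obtain ⟨C, hC, haC⟩ := exists_pos_le_ofReal_of_ne_top ha_fin.ne
  refine ⟨C, hC, fun v hv => ?_⟩
  calc _ ≤ mixNorm d 2 (2 * d / (d + 2)) I univ (fun p => a p.2 * ‖v p‖ ^ β) :=
        mixNorm_mono (by norm_num) (by positivity) (subset_univ _) fun p hp => ha _ _ hp.2
    _ ≤ eLpNorm' a (4 * d / 5) volume *
          mixNorm d 2 (4 * d / (2 * d - 1)) I univ (fun p => ‖v p‖ ^ β) := by
        refine mixNorm_mul_le two_pos (by positivity) ?_ ?_ ha_meas ha_fin.ne (by fun_prop)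
        · rw [div_lt_div_iff₀ (by positivity) (by positivity)]
          nlinarith
        · field_simp
          ring
    _ = eLpNorm' a (4 * d / 5) volume *
          mixNorm d (q0 d) (r0 d) I univ (fun p => ‖v p‖) ^ β := by
        have : 2 * (d : ℝ) - 1 ≠ 0 := by linarith
        rw [mixNorm_rpow (fun p => norm_nonneg _) (div_pos (by linarith) (by linarith)).ne']
        congr 3
        · rw [q0]; field_simp
        · rw [r0]; field_simp; ring
    _ ≤ _ := by gcongr

/-- on Ω = {|v| > W/4},
‖W^{p_c−2}|∇W||v|‖_{L²_t L^{2d/(d+2)}_x(Ω)} ≤ C ‖v‖_{L^{q₀}_t L^{r₀}_x}^{(2d+3)/(2(d−2))}. -/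
theorem Wpc2_gradW_v_large_regime (d : ℕ) (hd : 6 ≤ d) (I : Set ℝ) (hI : I.OrdConnected) :
    ∃ C : ℝ, 0 < C ∧ ∀ v : ℝ × Euc d → ℂ, Measurable v →
      mixNorm d 2 (2 * (d : ℝ) / ((d : ℝ) + 2)) I
          {p : ℝ × Euc d | p.1 ∈ I ∧ Wgs d p.2 / 4 < ‖v p‖}
          (fun p => (Wgs d p.2) ^ (pc d - 2) * ‖fderiv ℝ (Wgs d) p.2‖ * ‖v p‖) ≤
        ENNReal.ofReal C *
          (mixNorm d (q0 d) (r0 d) I Set.univ (fun p => ‖v p‖)) ^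
            ((2 * (d : ℝ) + 3) / (2 * ((d : ℝ) - 2))) :=
  Wpc2_gradW_v_large_regime_general d hd I
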